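/- arXiv:1306.0495 — 8 statements merged into one kernel-verified Lean document; each statement's English description precedes it below -/
import Mathlib

section
/- The linear map on 2×2 matrices defined by Φ(σ₀) = σ₀ and Φ(σᵢ) = λᵢσᵢ (i=1,2,3) is completely positive if and only if 1 + λ₃ ≥ |λ₁ + λ₂| and 1 − λ₃ ≥ |λ₁ − λ₂| (the Fujiwara–Algoet conditions). -/
open Matrix Kronecker
open scoped ComplexOrder

noncomputable section

def pauli1 : Matrix (Fin 2) (Fin 2) ℂ := !![0, 1; 1, 0]
def pauli2 : Matrix (Fin 2) (Fin 2) ℂ := !![0, -Complex.I; Complex.I, 0]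
def pauli3 : Matrix (Fin 2) (Fin 2) ℂ := !![1, 0; 0, -1]

/-- The Choi matrix `C_Φ = (Φ ⊗ I)(|Bell⟩⟨Bell|) = (1/2) ∑_{i,j} Φ(E_{ij}) ⊗ E_{ij}`. -/
def choiMatrix (f : Matrix (Fin 2) (Fin 2) ℂ → Matrix (Fin 2) (Fin 2) ℂ) :
    Matrix (Fin 2 × Fin 2) (Fin 2 × Fin 2) ℂ :=
  (1 / 2 : ℂ) • ∑ i : Fin 2, ∑ j : Fin 2,
    (f (Matrix.single i j 1)) ⊗ₖ (Matrix.single i j 1)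

/-!
Reordering the basis of `ℂ² ⊗ ℂ²` as `|00⟩, |11⟩, |01⟩, |10⟩` turns the Choi matrix of the
Pauli-diagonal map into `1/4` times a block diagonal matrix with the blocks
`[[1 + λ₃, λ₁ + λ₂], [λ₁ + λ₂, 1 + λ₃]]` and `[[1 - λ₃, λ₁ - λ₂], [λ₁ - λ₂, 1 - λ₃]]`.
A real matrix `[[t, s], [s, t]]` has the eigenvectors `(1, ±1)` with eigenvalues `t ± s`,
so it is positive semidefinite exactly when `|s| ≤ t`.
-/

namespace Matrix

theorem posSemidef_fromBlocks_zero_iff {m n R : Type*} [Fintype m] [Fintype n] [Ring R]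
    [PartialOrder R] [StarRing R] [AddLeftMono R] {A : Matrix m m R} {D : Matrix n n R} :
    (fromBlocks A 0 0 D).PosSemidef ↔ A.PosSemidef ∧ D.PosSemidef := by
  refine ⟨fun h => ⟨h.submatrix Sum.inl, h.submatrix Sum.inr⟩,
    fun ⟨hA, hD⟩ => .of_dotProduct_mulVec_nonneg ?_ fun x => ?_⟩
  · exact hA.isHermitian.fromBlocks (by simp) hD.isHermitian
  · rw [← Sum.elim_comp_inl_inr x, fromBlocks_mulVec]
    simpa [dotProduct, Fintype.sum_sum_type] using
      add_nonneg (hA.dotProduct_mulVec_nonneg (x ∘ Sum.inl))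
        (hD.dotProduct_mulVec_nonneg (x ∘ Sum.inr))

variable {𝕜 : Type*} [RCLike 𝕜]

theorem posSemidef_real_smul_iff {n : Type*} {a : ℝ} (ha : 0 < a) {M : Matrix n n 𝕜} :
    (a • M).PosSemidef ↔ M.PosSemidef := by
  refine ⟨fun h => ?_, fun h => h.smul ha.le⟩
  simpa [smul_smul, ha.ne'] using h.smul (inv_nonneg.mpr ha.le)

theorem posSemidef_circulant_fin_two_iff (t s : ℝ) :
    (!![(t : 𝕜), s; s, t]).PosSemidef ↔ |s| ≤ t := by
  rw [abs_le]
  constructor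
  · intro h
    have hplus := h.dotProduct_mulVec_nonneg ![1, 1]
    have hminus := h.dotProduct_mulVec_nonneg ![1, -1]
    simp [dotProduct, mulVec, Fin.sum_univ_two] at hplus hminus
    norm_cast at hplus hminus
    constructor <;> linarith
  · rintro ⟨hlower, hupper⟩
    have hspectral : !![(t : 𝕜), s; s, t] =
        ((t + s) / 2) • vecMulVec ![1, 1] (star ![1, 1]) +
          ((t - s) / 2) • vecMulVec ![1, -1] (star ![1, -1]) := by
      ext i j
      fin_cases i <;> fin_cases j <;> simp [vecMulVec, RCLike.real_smul_eq_coe_mul] <;>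
        push_cast <;> ring
    rw [hspectral]
    exact ((posSemidef_vecMulVec_self_star _).smul (by linarith)).add
      ((posSemidef_vecMulVec_self_star _).smul (by linarith))

end Matrix

theorem eq_pauli_expansion (X : Matrix (Fin 2) (Fin 2) ℂ) :
    X = ((X 0 0 + X 1 1) / 2) • 1 + ((X 0 1 + X 1 0) / 2) • pauli1 +
      (Complex.I * (X 0 1 - X 1 0) / 2) • pauli2 + ((X 0 0 - X 1 1) / 2) • pauli3 := by
  ext i j
  fin_cases i <;> fin_cases j <;> simp [pauli1, pauli2, pauli3] <;> ring_nf <;>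
    simp [Complex.I_sq] <;> ring

theorem choiMatrix_apply (f : Matrix (Fin 2) (Fin 2) ℂ → Matrix (Fin 2) (Fin 2) ℂ)
    (a b c d : Fin 2) :
    choiMatrix f (a, b) (c, d) = f (single b d 1) a c / 2 := by
  simp [choiMatrix, Matrix.sum_apply, kroneckerMap_apply, single_apply, ite_and,
    -Fin.sum_univ_two, div_eq_inv_mul]

def pairParityEquiv : Fin 2 ⊕ Fin 2 ≃ Fin 2 × Fin 2 where
  toFun := Sum.elim (fun i => (i, i)) (fun i => (i, i + 1))
  invFun p := if p.1 = p.2 then .inl p.1 else .inr p.1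
  left_inv := by decide
  right_inv := by decide

section PauliDiagonal

variable {Φ : Matrix (Fin 2) (Fin 2) ℂ →ₗ[ℂ] Matrix (Fin 2) (Fin 2) ℂ} {l₁ l₂ l₃ : ℝ}
  (h0 : Φ 1 = 1) (h1 : Φ pauli1 = (l₁ : ℂ) • pauli1) (h2 : Φ pauli2 = (l₂ : ℂ) • pauli2)
  (h3 : Φ pauli3 = (l₃ : ℂ) • pauli3)
include h0 h1 h2 h3

theorem pauliDiagonal_apply (X : Matrix (Fin 2) (Fin 2) ℂ) :
    Φ X = !![((1 + l₃) * X 0 0 + (1 - l₃) * X 1 1) / 2,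
        ((l₁ + l₂) * X 0 1 + (l₁ - l₂) * X 1 0) / 2;
      ((l₁ - l₂) * X 0 1 + (l₁ + l₂) * X 1 0) / 2,
        ((1 - l₃) * X 0 0 + (1 + l₃) * X 1 1) / 2] := by
  conv_lhs => rw [eq_pauli_expansion X]
  simp only [map_add, map_smul, h0, h1, h2, h3]
  ext i j
  fin_cases i <;> fin_cases j <;> simp [pauli1, pauli2, pauli3] <;> ring_nf <;>
    simp [Complex.I_sq] <;> ring

theorem choiMatrix_submatrix_pairParityEquiv :
    (choiMatrix Φ).submatrix pairParityEquiv pairParityEquiv = (1 / 4 : ℝ) •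
      fromBlocks !![(↑(1 + l₃) : ℂ), ↑(l₁ + l₂); ↑(l₁ + l₂), ↑(1 + l₃)] 0 0
        !![(↑(1 - l₃) : ℂ), ↑(l₁ - l₂); ↑(l₁ - l₂), ↑(1 - l₃)] := by
  ext (i | i) (j | j) <;> fin_cases i <;> fin_cases j <;>
    simp [pairParityEquiv, choiMatrix_apply, pauliDiagonal_apply h0 h1 h2 h3,
      Complex.real_smul] <;>
    ring

end PauliDiagonal

/-- Fujiwara–Algoet: the linear map determined by `σ₀ ↦ σ₀`, `σᵢ ↦ λᵢσᵢ` is completely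
positive (i.e. its Choi matrix is positive semidefinite) iff
`1 + λ₃ ≥ |λ₁ + λ₂|` and `1 - λ₃ ≥ |λ₁ - λ₂|`. -/
theorem fujiwara_algoet (Φ : Matrix (Fin 2) (Fin 2) ℂ →ₗ[ℂ] Matrix (Fin 2) (Fin 2) ℂ)
    (l₁ l₂ l₃ : ℝ)
    (h0 : Φ 1 = 1)
    (h1 : Φ pauli1 = (l₁ : ℂ) • pauli1)
    (h2 : Φ pauli2 = (l₂ : ℂ) • pauli2)
    (h3 : Φ pauli3 = (l₃ : ℂ) • pauli3) :
    (choiMatrix Φ).PosSemidef ↔ (|l₁ + l₂| ≤ 1 + l₃ ∧ |l₁ - l₂| ≤ 1 - l₃) := by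
  rw [← posSemidef_submatrix_equiv pairParityEquiv,
    choiMatrix_submatrix_pairParityEquiv h0 h1 h2 h3, posSemidef_real_smul_iff (by norm_num),
    posSemidef_fromBlocks_zero_iff]
  exact and_congr (posSemidef_circulant_fin_two_iff _ _)
    (posSemidef_circulant_fin_two_iff _ _)

end
end

section
/- The conditions 1 + λ₃ ≥ |λ₁ + λ₂| and 1 − λ₃ ≥ |λ₁ − λ₂| hold if and only if the point (λ₁, λ₂, λ₃) ∈ ℝ³ lies in the convex hull of the four points V₁ = (1,1,1), V₂ = (1,−1,−1), V₃ = (−1,1,−1), V₄ = (−1,−1,1). -/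
/-!
The vertices `Vᵢ` of the tetrahedron satisfy `Vᵢ ⬝ᵥ Vⱼ = 3` for `i = j` and `-1` otherwise,
`∑ Vᵢ = 0` and `∑ (Vᵢ ⬝ᵥ x) • Vᵢ = 4 • x`. Hence `wᵢ(x) = (1 + Vᵢ ⬝ᵥ x) / 4` are barycentric
coordinates: they sum to `1` and `∑ wᵢ(x) • Vᵢ = x`. So the tetrahedron is the polytope
`{x | ∀ i, -1 ≤ Vᵢ ⬝ᵥ x}`, and its four facet inequalities are the two Fujiwara–Algoet
conditions with the absolute values unfolded.
-/

open Finset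

theorem convexHull_range_eq_of_tight_frame {ι n : Type*} [Fintype ι] [Nonempty ι] [Fintype n]
    (v : ι → n → ℝ) (hsum : ∑ i, v i = 0)
    (hframe : ∀ x, ∑ i, (v i ⬝ᵥ x) • v i = (Fintype.card ι : ℝ) • x)
    (hdot : ∀ i j, -1 ≤ v i ⬝ᵥ v j) :
    convexHull ℝ (Set.range v) = {x | ∀ i, -1 ≤ v i ⬝ᵥ x} := by
  have hN : (0 : ℝ) < Fintype.card ι := by exact_mod_cast Fintype.card_pos
  apply subset_antisymm
  · refine convexHull_min (Set.range_subset_iff.2 fun j i => hdot i j) ?_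
    simp only [Set.ofPred_forall]
    exact convex_iInter fun i => convex_halfSpace_ge (dotProductBilin ℝ ℝ (v i)).isLinear (-1)
  · intro x hx
    set w : ι → ℝ := fun i => (1 + v i ⬝ᵥ x) / Fintype.card ι
    have hw_sum : ∑ i, w i = 1 := by
      simp only [w, ← sum_div, sum_add_distrib, ← sum_dotProduct, hsum, zero_dotProduct, add_zero,
        sum_const, card_univ, nsmul_eq_mul, mul_one, div_self hN.ne']
    have hw_center : ∑ i, w i • v i = x := by
      simp only [w, div_eq_inv_mul, mul_smul, ← smul_sum, add_smul, one_smul, sum_add_distrib,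
        hsum, hframe, zero_add, smul_smul, inv_mul_cancel₀ hN.ne']
    rw [← hw_center]
    exact (convex_convexHull ℝ _).sum_mem (fun i _ => div_nonneg (by linarith [hx i]) hN.le)
      hw_sum (fun i _ => subset_convexHull ℝ _ (Set.mem_range_self i))

def tetraVertex : Fin 4 → Fin 3 → ℝ := ![![1, 1, 1], ![1, -1, -1], ![-1, 1, -1], ![-1, -1, 1]]

theorem range_tetraVertex :
    Set.range tetraVertex = {![1, 1, 1], ![1, -1, -1], ![-1, 1, -1], ![-1, -1, 1]} := by
  simp only [tetraVertex, Matrix.range_cons, Matrix.range_empty, Set.union_empty,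
    Set.singleton_union]

theorem sum_tetraVertex : ∑ i, tetraVertex i = 0 := by
  ext j
  fin_cases j <;> simp [tetraVertex, Fin.sum_univ_four]

theorem sum_dotProduct_smul_tetraVertex (x : Fin 3 → ℝ) :
    ∑ i, (tetraVertex i ⬝ᵥ x) • tetraVertex i = (4 : ℝ) • x := by
  ext j
  fin_cases j <;> simp [tetraVertex, Fin.sum_univ_four, dotProduct, Fin.sum_univ_three] <;> ring

theorem tetraVertex_dotProduct (i j : Fin 4) :
    tetraVertex i ⬝ᵥ tetraVertex j = if i = j then 3 else -1 := by
  fin_cases i <;> fin_cases j <;> simp [tetraVertex, dotProduct, Fin.sum_univ_three] <;> norm_num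

theorem convexHull_range_tetraVertex :
    convexHull ℝ (Set.range tetraVertex) = {x | ∀ i, -1 ≤ tetraVertex i ⬝ᵥ x} := by
  refine convexHull_range_eq_of_tight_frame _ sum_tetraVertex
    (by simpa using sum_dotProduct_smul_tetraVertex) fun i j => ?_
  rw [tetraVertex_dotProduct]
  split_ifs <;> norm_num

theorem fac_iff_forall_neg_one_le_tetraVertex_dotProduct (l₁ l₂ l₃ : ℝ) :
    (|l₁ + l₂| ≤ 1 + l₃ ∧ |l₁ - l₂| ≤ 1 - l₃) ↔ ∀ i, -1 ≤ tetraVertex i ⬝ᵥ ![l₁, l₂, l₃] := by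
  simp only [Fin.forall_fin_succ, IsEmpty.forall_iff, and_true, abs_le, tetraVertex, dotProduct,
    Fin.sum_univ_three, Matrix.cons_val_zero, Matrix.cons_val_one, Matrix.cons_val_two,
    Matrix.cons_val_succ, Matrix.head_cons, Matrix.tail_cons]
  grind

/-- The Fujiwara–Algoet conditions `1 + λ₃ ≥ |λ₁ + λ₂|` and `1 - λ₃ ≥ |λ₁ - λ₂|` hold
iff `(λ₁, λ₂, λ₃)` lies in the convex hull of the tetrahedron vertices
`(1,1,1)`, `(1,-1,-1)`, `(-1,1,-1)`, `(-1,-1,1)`. -/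
theorem FAC_iff_mem_tetrahedron (l₁ l₂ l₃ : ℝ) :
    (|l₁ + l₂| ≤ 1 + l₃ ∧ |l₁ - l₂| ≤ 1 - l₃) ↔
    ![l₁, l₂, l₃] ∈ convexHull ℝ
      ({![1, 1, 1], ![1, -1, -1], ![-1, 1, -1], ![-1, -1, 1]} : Set (Fin 3 → ℝ)) := by
  rw [← range_tetraVertex, convexHull_range_tetraVertex,
    fac_iff_forall_neg_one_le_tetraVertex_dotProduct]
  rfl
end

section
/- If Φ_PF(1/2) = Φ₂ ∘ Φ₁ is a decomposition of the 1/2-phase-flip channel into two qubit channels, then at least one of Φ₁, Φ₂ is unitarily equivalent to Φ_PF(1/2); i.e., one of the corresponding 3×3 Bloch matrices has signed singular values (0,0,1) up to sign and permutation. -/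
open Matrix

/-- Fujiwara–Algoet conditions on a triple of signed singular values. -/
def FAC (l : Fin 3 → ℝ) : Prop :=
  |l 0 + l 1| ≤ 1 + l 2 ∧ |l 0 - l 1| ≤ 1 - l 2

/-- A vector has signed singular values `(0,0,1)` up to sign and permutation. -/
def isHalfPhaseFlipSpectrum (l : Fin 3 → ℝ) : Prop :=
  ∃ σ : Equiv.Perm (Fin 3), ∀ j, |l (σ j)| = ![0, 0, 1] j

/-!
The Fujiwara–Algoet conditions bound all signed singular values by one in modulus, so both
Bloch matrices are contractions. As `M₂ (M₁ e₃) = e₃`, each of them preserves the length of a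
nonzero vector, which forces a singular value of modulus one in each. Since
`det (M₂ M₁) = 0`, one of them also has a vanishing singular value, and then the
Fujiwara–Algoet conditions force its third singular value to vanish as well.
-/

theorem FAC.abs_le_one {a : Fin 3 → ℝ} (ha : FAC a) (i : Fin 3) : |a i| ≤ 1 := by
  obtain ⟨h₁, h₂⟩ := ha
  rw [abs_le] at h₁ h₂ ⊢
  fin_cases i <;> constructor <;> simp <;> linarith

theorem FAC.eq_zero_of_abs_eq_one {a : Fin 3 → ℝ} (ha : FAC a) {i j k : Fin 3}
    (hi : |a i| = 1) (hj : a j = 0) (hk : k ≠ i) : a k = 0 := by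
  obtain ⟨h₁, h₂⟩ := ha
  rw [abs_le] at h₁ h₂
  rcases (abs_eq zero_le_one).1 hi with hi | hi <;>
    fin_cases i <;> fin_cases j <;> fin_cases k <;> simp_all <;> linarith

theorem isHalfPhaseFlipSpectrum_of_forall_ne_eq_zero {a : Fin 3 → ℝ} {i : Fin 3}
    (hi : |a i| = 1) (h : ∀ k ≠ i, a k = 0) : isHalfPhaseFlipSpectrum a := by
  refine ⟨Equiv.swap i 2, fun j => ?_⟩
  by_cases hj : j = 2
  · simp [hj, hi]
  · have : Equiv.swap i 2 j ≠ i := by simpa [Equiv.swap_apply_eq_iff] using hj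
    fin_cases j <;> simp_all

theorem FAC.isHalfPhaseFlipSpectrum {a : Fin 3 → ℝ} (ha : FAC a) (hone : ∃ i, |a i| = 1)
    (hzero : ∃ j, a j = 0) : isHalfPhaseFlipSpectrum a :=
  let ⟨_, hi⟩ := hone
  let ⟨_, hj⟩ := hzero
  isHalfPhaseFlipSpectrum_of_forall_ne_eq_zero hi fun _ hk => ha.eq_zero_of_abs_eq_one hi hj hk

section

variable {n : Type*} [Fintype n] [DecidableEq n]

theorem Matrix.dotProduct_mulVec_self_of_mem_orthogonalGroup {A : Matrix n n ℝ}
    (hA : A ∈ orthogonalGroup n ℝ) (x : n → ℝ) : A *ᵥ x ⬝ᵥ A *ᵥ x = x ⬝ᵥ x := by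
  rw [dotProduct_mulVec, vecMul_mulVec, (mem_orthogonalGroup_iff' n ℝ).1 hA, vecMul_one]

theorem dotProduct_self_diagonal_mulVec_le {d : n → ℝ} (hd : ∀ i, |d i| ≤ 1) (x : n → ℝ) :
    diagonal d *ᵥ x ⬝ᵥ diagonal d *ᵥ x ≤ x ⬝ᵥ x := by
  simp only [dotProduct, mulVec_diagonal]
  refine Finset.sum_le_sum fun i _ => ?_
  have : d i * d i ≤ 1 := by nlinarith [abs_mul_abs_self (d i), abs_nonneg (d i), hd i]
  nlinarith [mul_self_nonneg (x i)]

theorem exists_abs_eq_one_of_dotProduct_self_diagonal_mulVec_eq {d : n → ℝ}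
    (hd : ∀ i, |d i| ≤ 1) {x : n → ℝ} (hx : x ≠ 0)
    (h : diagonal d *ᵥ x ⬝ᵥ diagonal d *ᵥ x = x ⬝ᵥ x) : ∃ i, |d i| = 1 := by
  by_contra! hlt
  have hlt i : d i * d i < 1 := by
    nlinarith [abs_mul_abs_self (d i), abs_nonneg (d i), lt_of_le_of_ne (hd i) (hlt i)]
  -- `x ⬝ᵥ x - (D x) ⬝ᵥ (D x) = ∑ (1 - dᵢ²) xᵢ²` vanishes termwise, forcing `x = 0`.
  have hsum : ∑ i, (1 - d i * d i) * (x i * x i) = 0 := by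
    simp only [dotProduct, mulVec_diagonal] at h
    rw [← sub_eq_zero.2 h.symm, ← Finset.sum_sub_distrib]
    exact Finset.sum_congr rfl fun i _ => by ring
  rw [Finset.sum_eq_zero_iff_of_nonneg fun i _ =>
    mul_nonneg (sub_nonneg.2 (hlt i).le) (mul_self_nonneg _)] at hsum
  exact hx <| funext fun i => by
    simpa [(sub_pos.2 (hlt i)).ne'] using hsum i (Finset.mem_univ i)

variable {R S : Matrix n n ℝ} {d : n → ℝ}

theorem dotProduct_self_mulVec_le_of_svd (hR : R ∈ orthogonalGroup n ℝ)
    (hS : S ∈ orthogonalGroup n ℝ) (hd : ∀ i, |d i| ≤ 1) (x : n → ℝ) :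
    (R * diagonal d * S) *ᵥ x ⬝ᵥ (R * diagonal d * S) *ᵥ x ≤ x ⬝ᵥ x := by
  rw [← mulVec_mulVec, ← mulVec_mulVec, dotProduct_mulVec_self_of_mem_orthogonalGroup hR,
    ← dotProduct_mulVec_self_of_mem_orthogonalGroup hS x]
  exact dotProduct_self_diagonal_mulVec_le hd _

theorem exists_abs_eq_one_of_svd (hR : R ∈ orthogonalGroup n ℝ) (hS : S ∈ orthogonalGroup n ℝ)
    (hd : ∀ i, |d i| ≤ 1) {x : n → ℝ} (hx : x ≠ 0)
    (h : (R * diagonal d * S) *ᵥ x ⬝ᵥ (R * diagonal d * S) *ᵥ x = x ⬝ᵥ x) :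
    ∃ i, |d i| = 1 := by
  have hSx : S *ᵥ x ≠ 0 := fun h0 => hx <| by
    rw [← one_mulVec x, ← (mem_orthogonalGroup_iff' n ℝ).1 hS, ← mulVec_mulVec, h0, mulVec_zero]
  refine exists_abs_eq_one_of_dotProduct_self_diagonal_mulVec_eq hd hSx ?_
  rwa [← mulVec_mulVec, ← mulVec_mulVec, dotProduct_mulVec_self_of_mem_orthogonalGroup hR,
    ← dotProduct_mulVec_self_of_mem_orthogonalGroup hS x] at h

theorem det_svd (hR : R ∈ specialOrthogonalGroup n ℝ) (hS : S ∈ specialOrthogonalGroup n ℝ) :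
    (R * diagonal d * S).det = ∏ i, d i := by
  rw [det_mul, det_mul, (mem_specialOrthogonalGroup_iff.1 hR).2,
    (mem_specialOrthogonalGroup_iff.1 hS).2, det_diagonal, one_mul, mul_one]

end

/-- If `Φ_PF(1/2) = Φ₂ ∘ Φ₁`, i.e. the Bloch matrices of two qubit channels
(written in signed singular value decomposition with values satisfying the
Fujiwara–Algoet conditions) compose to `diag(0,0,1)`, then at least one of the
two channels has signed singular values `(0,0,1)` up to sign and permutation,
i.e. is unitarily equivalent to `Φ_PF(1/2)`. -/
theorem halfPhaseFlip_indecomposable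
    (M₁ M₂ : Matrix (Fin 3) (Fin 3) ℝ) (a b : Fin 3 → ℝ)
    (R₁ S₁ R₂ S₂ : Matrix (Fin 3) (Fin 3) ℝ)
    (hR₁ : R₁ ∈ Matrix.specialOrthogonalGroup (Fin 3) ℝ)
    (hS₁ : S₁ ∈ Matrix.specialOrthogonalGroup (Fin 3) ℝ)
    (hR₂ : R₂ ∈ Matrix.specialOrthogonalGroup (Fin 3) ℝ)
    (hS₂ : S₂ ∈ Matrix.specialOrthogonalGroup (Fin 3) ℝ)
    (h₁ : M₁ = R₁ * Matrix.diagonal a * S₁)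
    (h₂ : M₂ = R₂ * Matrix.diagonal b * S₂)
    (ha : FAC a) (hb : FAC b)
    (hcomp : M₂ * M₁ = Matrix.diagonal ![0, 0, 1]) :
    isHalfPhaseFlipSpectrum a ∨ isHalfPhaseFlipSpectrum b := by
  subst h₁ h₂
  have orth {A : Matrix (Fin 3) (Fin 3) ℝ} (hA : A ∈ specialOrthogonalGroup (Fin 3) ℝ) :=
    (mem_specialOrthogonalGroup_iff.1 hA).1
  have hdet := congrArg det hcomp
  rw [det_mul, det_svd hR₂ hS₂, det_svd hR₁ hS₁, det_diagonal,
    Finset.prod_eq_zero (f := ![(0 : ℝ), 0, 1]) (Finset.mem_univ 0) rfl, mul_eq_zero,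
    Finset.prod_eq_zero_iff, Finset.prod_eq_zero_iff] at hdet
  set e : Fin 3 → ℝ := ![0, 0, 1]
  set w := (R₁ * diagonal a * S₁) *ᵥ e
  have hMw : (R₂ * diagonal b * S₂) *ᵥ w = e := by
    rw [mulVec_mulVec, hcomp]; ext i; fin_cases i <;> simp [e, mulVec_diagonal]
  have he : e ≠ 0 := fun h => by simpa [e] using congrFun h 2
  have hw : w ≠ 0 := fun h => he <| by rw [← hMw, h, mulVec_zero]
  have hwe := dotProduct_self_mulVec_le_of_svd (orth hR₁) (orth hS₁) ha.abs_le_one e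
  have hew := dotProduct_self_mulVec_le_of_svd (orth hR₂) (orth hS₂) hb.abs_le_one w
  rw [hMw] at hew
  have haone := exists_abs_eq_one_of_svd (orth hR₁) (orth hS₁) ha.abs_le_one he
    (le_antisymm hwe hew)
  have hbone := exists_abs_eq_one_of_svd (orth hR₂) (orth hS₂) hb.abs_le_one hw
    (by rw [hMw]; exact le_antisymm hew hwe)
  rcases hdet with ⟨j, -, hj⟩ | ⟨j, -, hj⟩
  · exact Or.inr (hb.isHalfPhaseFlipSpectrum hbone ⟨j, hj⟩)
  · exact Or.inl (ha.isHalfPhaseFlipSpectrum haone ⟨j, hj⟩)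
end

section
/- Let r = 1 − λ₁² − λ₂² − λ₃² + 2(λ₁²u₁² + λ₂²u₂² + λ₃²u₃²) for a unit vector (u₁,u₂,u₃), and q = (1+λ₁+λ₂+λ₃)(1+λ₁−λ₂−λ₃)(1−λ₁+λ₂−λ₃)(1−λ₁−λ₂+λ₃). If (λ₁,λ₂,λ₃) satisfies the Fujiwara–Algoet conditions, then r² − q ≥ 0. -/
/-!
Write `rᵢ = 1 - λ₁² - λ₂² - λ₃² + 2λᵢ²`. Since `∑ uᵢ² = 1`, `r = ∑ uᵢ² rᵢ` is a convex combination
of the `rᵢ`. Each `rᵢ` is half the sum of two products of pairs of the four factors of `q`, hence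
nonnegative under the Fujiwara–Algoet conditions, and `rᵢ² - q` is four times a square. So every
`rᵢ` is at least `√q`, hence so is `r`, and `r² ≥ q`.
-/

def FujiwaraAlgoet (a b c : ℝ) : Prop :=
  |a + b| ≤ 1 + c ∧ |a - b| ≤ 1 - c

/-- The quantity `q` of the statement. -/
def faProduct (a b c : ℝ) : ℝ :=
  (1 + a + b + c) * (1 + a - b - c) * (1 - a + b - c) * (1 - a - b + c)

namespace FujiwaraAlgoet

variable {a b c : ℝ}

theorem factors_nonneg (h : FujiwaraAlgoet a b c) :
    0 ≤ 1 + a + b + c ∧ 0 ≤ 1 + a - b - c ∧ 0 ≤ 1 - a + b - c ∧ 0 ≤ 1 - a - b + c := by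
  obtain ⟨⟨h₁, h₂⟩, ⟨h₃, h₄⟩⟩ := And.imp abs_le.mp abs_le.mp h
  refine ⟨?_, ?_, ?_, ?_⟩ <;> linarith

theorem of_factors_nonneg (h₀ : 0 ≤ 1 + a + b + c) (h₁ : 0 ≤ 1 + a - b - c)
    (h₂ : 0 ≤ 1 - a + b - c) (h₃ : 0 ≤ 1 - a - b + c) : FujiwaraAlgoet a b c :=
  ⟨abs_le.mpr ⟨by linarith, by linarith⟩, abs_le.mpr ⟨by linarith, by linarith⟩⟩

theorem rotate (h : FujiwaraAlgoet a b c) : FujiwaraAlgoet b c a := by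
  obtain ⟨h₀, h₁, h₂, h₃⟩ := h.factors_nonneg
  exact of_factors_nonneg (by linarith) (by linarith) (by linarith) (by linarith)

theorem swap (h : FujiwaraAlgoet a b c) : FujiwaraAlgoet a c b := by
  obtain ⟨h₀, h₁, h₂, h₃⟩ := h.factors_nonneg
  exact of_factors_nonneg (by linarith) (by linarith) (by linarith) (by linarith)

theorem one_sub_sq_sub_sq_add_sq_nonneg (h : FujiwaraAlgoet a b c) :
    0 ≤ 1 - a ^ 2 - b ^ 2 + c ^ 2 := by
  obtain ⟨h₀, h₁, h₂, h₃⟩ := h.factors_nonneg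
  have : 2 * (1 - a ^ 2 - b ^ 2 + c ^ 2) =
      (1 + a + b + c) * (1 - a - b + c) + (1 + a - b - c) * (1 - a + b - c) := by ring
  linarith [mul_nonneg h₀ h₃, mul_nonneg h₁ h₂]

end FujiwaraAlgoet

theorem faProduct_rotate (a b c : ℝ) : faProduct b c a = faProduct a b c := by
  unfold faProduct; ring

theorem faProduct_swap (a b c : ℝ) : faProduct a c b = faProduct a b c := by
  unfold faProduct; ring

theorem sq_one_sub_sq_sub_sq_add_sq_sub_faProduct (a b c : ℝ) :
    (1 - a ^ 2 - b ^ 2 + c ^ 2) ^ 2 - faProduct a b c = 4 * (a * b - c) ^ 2 := by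
  unfold faProduct; ring

theorem faProduct_le_sq (a b c : ℝ) : faProduct a b c ≤ (1 - a ^ 2 - b ^ 2 + c ^ 2) ^ 2 := by
  linarith [sq_one_sub_sq_sub_sq_add_sq_sub_faProduct a b c, sq_nonneg (a * b - c)]

theorem le_sq_sum_mul_of_le_sq {ι : Type*} (s : Finset ι) (w x : ι → ℝ) (q : ℝ)
    (hw : ∀ i ∈ s, 0 ≤ w i) (hw₁ : ∑ i ∈ s, w i = 1)
    (hx : ∀ i ∈ s, 0 ≤ x i ∧ q ≤ x i ^ 2) :
    q ≤ (∑ i ∈ s, w i * x i) ^ 2 := by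
  have hsqrt : √q ≤ ∑ i ∈ s, w i * x i :=
    calc √q = ∑ i ∈ s, w i * √q := by rw [← Finset.sum_mul, hw₁, one_mul]
      _ ≤ ∑ i ∈ s, w i * x i := Finset.sum_le_sum fun i hi =>
          mul_le_mul_of_nonneg_left (Real.sqrt_le_iff.mpr (hx i hi)) (hw i hi)
  exact (Real.sqrt_le_iff.mp hsqrt).2

/-- If `(λ₁,λ₂,λ₃)` satisfies the Fujiwara–Algoet conditions and `(u₁,u₂,u₃)` is a unit
vector, then with `r = 1 - ∑λᵢ² + 2∑λᵢ²uᵢ²` and `q = 256 q₀q₁q₂q₃` one has `r² - q ≥ 0`. -/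
theorem discriminant_nonneg (l₁ l₂ l₃ u₁ u₂ u₃ : ℝ)
    (hu : u₁ ^ 2 + u₂ ^ 2 + u₃ ^ 2 = 1)
    (hFAC : |l₁ + l₂| ≤ 1 + l₃ ∧ |l₁ - l₂| ≤ 1 - l₃) :
    0 ≤ (1 - l₁ ^ 2 - l₂ ^ 2 - l₃ ^ 2 +
          2 * (l₁ ^ 2 * u₁ ^ 2 + l₂ ^ 2 * u₂ ^ 2 + l₃ ^ 2 * u₃ ^ 2)) ^ 2 -
        (1 + l₁ + l₂ + l₃) * (1 + l₁ - l₂ - l₃) * (1 - l₁ + l₂ - l₃) *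
          (1 - l₁ - l₂ + l₃) := by
  have h : FujiwaraAlgoet l₁ l₂ l₃ := hFAC
  let r : Fin 3 → ℝ := ![1 - l₂ ^ 2 - l₃ ^ 2 + l₁ ^ 2, 1 - l₁ ^ 2 - l₃ ^ 2 + l₂ ^ 2,
    1 - l₁ ^ 2 - l₂ ^ 2 + l₃ ^ 2]
  have hr : ∀ i ∈ Finset.univ, 0 ≤ r i ∧ faProduct l₁ l₂ l₃ ≤ r i ^ 2 := by
    intro i _
    fin_cases i
    · exact ⟨h.rotate.one_sub_sq_sub_sq_add_sq_nonneg,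
        faProduct_rotate l₁ l₂ l₃ ▸ faProduct_le_sq l₂ l₃ l₁⟩
    · exact ⟨h.swap.one_sub_sq_sub_sq_add_sq_nonneg,
        faProduct_swap l₁ l₂ l₃ ▸ faProduct_le_sq l₁ l₃ l₂⟩
    · exact ⟨h.one_sub_sq_sub_sq_add_sq_nonneg, faProduct_le_sq l₁ l₂ l₃⟩
  have hconvex : 1 - l₁ ^ 2 - l₂ ^ 2 - l₃ ^ 2 +
      2 * (l₁ ^ 2 * u₁ ^ 2 + l₂ ^ 2 * u₂ ^ 2 + l₃ ^ 2 * u₃ ^ 2) =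
      ∑ i, ![u₁ ^ 2, u₂ ^ 2, u₃ ^ 2] i * r i := by
    simp only [Fin.sum_univ_three, r, Matrix.cons_val]
    linear_combination (-(1 - l₁ ^ 2 - l₂ ^ 2 - l₃ ^ 2)) * hu
  rw [hconvex, sub_nonneg]
  exact le_sq_sum_mul_of_le_sq Finset.univ _ r _
    (by simp [Fin.forall_fin_succ, sq_nonneg]) (by simpa [Fin.sum_univ_three] using hu) hr
end

section
/- Suppose |λ₃| ≤ 1 and λ₃ has the smallest absolute value among λ₁,λ₂,λ₃, and set r_min = 1 − λ₁² − λ₂² + λ₃², q = 256 q₀q₁q₂q₃ ≥ 0, and b₀ = 1 − λ₁² − λ₂² − λ₃² + 2λ₁λ₂λ₃. Then r_min − √(r_min² − q) ≤ b₀ ≤ r_min + √(r_min² − q). -/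
/-!
The discriminant `r_min² - q` is the perfect square `(2(λ₁λ₂ - λ₃))²`, so the two roots are
`r_min ∓ 2|λ₁λ₂ - λ₃|`, while `b₀ - r_min = λ₃ · 2(λ₁λ₂ - λ₃)`. Hence `|λ₃| ≤ 1` keeps `b₀` within
distance `2|λ₁λ₂ - λ₃|` of `r_min`.
-/

lemma abs_mul_le_abs_of_abs_le_one {c d : ℝ} (hc : |c| ≤ 1) : |c * d| ≤ |d| := by
  rw [abs_mul]
  exact mul_le_of_le_one_left (abs_nonneg d) hc

lemma rmin_sq_sub_q_eq_sq (l₁ l₂ l₃ : ℝ) :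
    (1 - l₁ ^ 2 - l₂ ^ 2 + l₃ ^ 2) ^ 2 -
        256 * ((1 + l₁ + l₂ + l₃) / 4) * ((1 + l₁ - l₂ - l₃) / 4) *
          ((1 - l₁ + l₂ - l₃) / 4) * ((1 - l₁ - l₂ + l₃) / 4) =
      (2 * (l₁ * l₂ - l₃)) ^ 2 := by
  ring

lemma b0_sub_rmin_eq (l₁ l₂ l₃ : ℝ) :
    (1 - l₁ ^ 2 - l₂ ^ 2 - l₃ ^ 2 + 2 * l₁ * l₂ * l₃) - (1 - l₁ ^ 2 - l₂ ^ 2 + l₃ ^ 2) =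
      l₃ * (2 * (l₁ * l₂ - l₃)) := by
  ring

theorem b0_between_roots_general (l₁ l₂ l₃ : ℝ)
    (h3 : |l₃| ≤ 1) :
    (let rmin := 1 - l₁ ^ 2 - l₂ ^ 2 + l₃ ^ 2
     let q := 256 * ((1 + l₁ + l₂ + l₃) / 4) * ((1 + l₁ - l₂ - l₃) / 4) *
        ((1 - l₁ + l₂ - l₃) / 4) * ((1 - l₁ - l₂ + l₃) / 4)
     let b₀ := 1 - l₁ ^ 2 - l₂ ^ 2 - l₃ ^ 2 + 2 * l₁ * l₂ * l₃
     rmin - Real.sqrt (rmin ^ 2 - q) ≤ b₀ ∧ b₀ ≤ rmin + Real.sqrt (rmin ^ 2 - q)) := by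
  intro rmin q b₀
  have hsqrt : √(rmin ^ 2 - q) = |2 * (l₁ * l₂ - l₃)| := by
    rw [(rmin_sq_sub_q_eq_sq l₁ l₂ l₃ : rmin ^ 2 - q = _), Real.sqrt_sq_eq_abs]
  have hdev : |b₀ - rmin| ≤ |2 * (l₁ * l₂ - l₃)| := by
    rw [(b0_sub_rmin_eq l₁ l₂ l₃ : b₀ - rmin = _)]
    exact abs_mul_le_abs_of_abs_le_one h3
  obtain ⟨hlo, hhi⟩ := abs_le.mp hdev
  rw [hsqrt]
  exact ⟨by linarith, by linarith⟩

/-- With `λ₃` of smallest absolute value, `|λ₃| ≤ 1`, `r_min = 1 - λ₁² - λ₂² + λ₃²`,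
`q = 256 q₀q₁q₂q₃ ≥ 0` and `b₀ = 1 - λ₁² - λ₂² - λ₃² + 2λ₁λ₂λ₃`, one has
`r_min - √(r_min² - q) ≤ b₀ ≤ r_min + √(r_min² - q)`. -/
theorem b0_between_roots (l₁ l₂ l₃ : ℝ)
    (h3 : |l₃| ≤ 1) (h31 : |l₃| ≤ |l₁|) (h32 : |l₃| ≤ |l₂|)
    (hq : 0 ≤ 256 * ((1 + l₁ + l₂ + l₃) / 4) * ((1 + l₁ - l₂ - l₃) / 4) *
        ((1 - l₁ + l₂ - l₃) / 4) * ((1 - l₁ - l₂ + l₃) / 4)) :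
    (let rmin := 1 - l₁ ^ 2 - l₂ ^ 2 + l₃ ^ 2
     let q := 256 * ((1 + l₁ + l₂ + l₃) / 4) * ((1 + l₁ - l₂ - l₃) / 4) *
        ((1 - l₁ + l₂ - l₃) / 4) * ((1 - l₁ - l₂ + l₃) / 4)
     let b₀ := 1 - l₁ ^ 2 - l₂ ^ 2 - l₃ ^ 2 + 2 * l₁ * l₂ * l₃
     rmin - Real.sqrt (rmin ^ 2 - q) ≤ b₀ ∧ b₀ ≤ rmin + Real.sqrt (rmin ^ 2 - q)) :=
  b0_between_roots_general l₁ l₂ l₃ h3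
end

section
/- Let C be a circle in ℝ² and E an ellipse contained inside the closed disc bounded by C. If C ∩ E contains three distinct points, then E = C. -/
/-!
Pull back by `g = f⁻¹`. The filled ellipse `f '' closedBall 0 1` is the convex hull of `E`, so it
lies in the disc and its interior in the open disc; hence `1 ≤ ‖g x‖` on the circle, with equality
at `M`, `N`, `O`. Parametrising the circle rationally from the pole `O`, the function
`s ↦ (1 + s²)² (‖g x(s)‖² - 1)` is a nonnegative polynomial of degree at most 3 (its `s⁴`
coefficient is `‖g O‖² - 1 = 0`) with double roots at the parameters of `M` and `N`, so it
vanishes and the circle lies in `E`. Then `f '' closedBall 0 1 = convexHull E` contains the disc,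
so it is the disc, and `E`, the image of its boundary, is the circle.
-/

open Metric Module Polynomial
open scoped EuclideanSpace

attribute [local instance] FiniteDimensional.of_fact_finrank_eq_two

namespace Polynomial

lemma one_lt_rootMultiplicity_of_forall_eval_nonneg {P : ℝ[X]} (hP0 : P ≠ 0)
    (hP : ∀ x, 0 ≤ P.eval x) {a : ℝ} (ha : P.IsRoot a) : 1 < P.rootMultiplicity a := by
  refine (one_lt_rootMultiplicity_iff_isRoot hP0).2 ⟨ha, ?_⟩
  have hmin : IsLocalMin (fun x => P.eval x) a :=
    Filter.Eventually.of_forall fun x => by simpa [ha.eq_zero] using hP x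
  simpa [IsRoot, Polynomial.deriv] using hmin.deriv_eq_zero

lemma eq_zero_of_forall_eval_nonneg_of_natDegree_lt {P : ℝ[X]} (hP : ∀ x, 0 ≤ P.eval x)
    {s : Finset ℝ} (hs : ∀ a ∈ s, P.IsRoot a) (hdeg : P.natDegree < 2 * s.card) : P = 0 := by
  classical
  by_contra hP0
  have hle : 2 • s.val ≤ P.roots := Multiset.le_iff_count.2 fun a => by
    rw [Multiset.count_nsmul, count_roots]
    by_cases ha : a ∈ s
    · rw [Multiset.count_eq_one_of_mem s.nodup ha]
      exact one_lt_rootMultiplicity_of_forall_eval_nonneg hP0 hP (hs a ha)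
    · simp [Multiset.count_eq_zero_of_notMem ha]
  have := (Multiset.card_le_card hle).trans (card_roots' P)
  simp only [Multiset.card_nsmul, Finset.card_val] at this
  omega

end Polynomial

lemma exists_natDegree_le_three_eval_eq_norm_sq_sub {F : Type*} [NormedAddCommGroup F]
    [InnerProductSpace ℝ F] {a : F} (ha : ‖a‖ = 1) (b c : F) :
    ∃ P : ℝ[X], P.natDegree ≤ 3 ∧
      ∀ s : ℝ, P.eval s = ‖s ^ 2 • a + s • b + c‖ ^ 2 - (1 + s ^ 2) ^ 2 := by
  refine ⟨C (2 * inner ℝ a b) * X ^ 3 + C (‖b‖ ^ 2 + 2 * inner ℝ a c - 2) * X ^ 2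
    + C (2 * inner ℝ b c) * X + C (‖c‖ ^ 2 - 1), natDegree_cubic_le, fun s => ?_⟩
  simp only [eval_add, eval_mul, eval_pow, eval_C, eval_X, ← real_inner_self_eq_norm_sq,
    inner_add_left, inner_add_right, real_inner_smul_left, real_inner_smul_right,
    real_inner_comm a b, real_inner_comm a c, real_inner_comm b c]
  rw [real_inner_self_eq_norm_sq a, ha]
  ring

namespace Orientation

variable {V : Type*} [NormedAddCommGroup V] [InnerProductSpace ℝ V] [Fact (finrank ℝ V = 2)]
  (o : Orientation ℝ V (Fin 2))

local notation "J" => o.rightAngleRotation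
local notation "ω" => o.areaForm

lemma norm_sq_smul_eq_inner_smul_add_areaForm_smul (p u : V) :
    ‖p‖ ^ 2 • u = inner ℝ p u • p + ω p u • J p := by
  set w := ‖p‖ ^ 2 • u - (inner ℝ p u • p + ω p u • J p)
  have hinner : inner ℝ p w = 0 := by
    simp only [w, inner_sub_right, inner_add_right, real_inner_smul_right,
      real_inner_self_eq_norm_sq, o.inner_rightAngleRotation_right, o.areaForm_apply_self]
    ring
  have harea : ω p w = 0 := by
    simp only [w, map_sub, map_add, map_smul, smul_eq_mul, o.areaForm_apply_self,
      o.areaForm_rightAngleRotation_right, real_inner_self_eq_norm_sq]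
    ring
  rcases eq_or_ne p 0 with rfl | hp
  · simp
  · have hw : ‖p‖ ^ 2 * ‖w‖ ^ 2 = 0 := by
      rw [← o.inner_sq_add_areaForm_sq, hinner, harea]; ring
    simpa [hp, w, sub_eq_zero] using hw

/-- Inverse stereographic projection from the pole `c + p` onto the circle of centre `c` through
`c + p`; it misses only the pole. -/
noncomputable def circleParam (c p : V) (s : ℝ) : V :=
  c + (1 + s ^ 2)⁻¹ • ((s ^ 2 - 1) • p + (2 * s) • J p)

lemma circleParam_mem_sphere (c p : V) (s : ℝ) : o.circleParam c p s ∈ sphere c ‖p‖ := by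
  have hs : 0 < 1 + s ^ 2 := by positivity
  have hnorm : ‖(s ^ 2 - 1) • p + (2 * s) • J p‖ = (1 + s ^ 2) * ‖p‖ := by
    rw [← sq_eq_sq₀ (norm_nonneg _) (by positivity), norm_add_sq_real, norm_smul, norm_smul,
      real_inner_smul_left, real_inner_smul_right, real_inner_comm, o.inner_rightAngleRotation_self,
      LinearIsometryEquiv.norm_map, Real.norm_eq_abs, Real.norm_eq_abs]
    ring_nf
    rw [sq_abs, sq_abs]
    ring
  rw [mem_sphere_iff_norm, circleParam, add_sub_cancel_left, norm_smul, hnorm, norm_inv,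
    Real.norm_of_nonneg hs.le, inv_mul_cancel_left₀ hs.ne']

lemma exists_circleParam_eq {c p x : V} (hx : x ∈ sphere c ‖p‖) (hxp : x ≠ c + p) :
    ∃ s, o.circleParam c p s = x := by
  set u := x - c
  have hu : ‖u‖ = ‖p‖ := mem_sphere_iff_norm.1 hx
  set r := ‖p‖ ^ 2
  set α := inner ℝ p u
  set β := ω p u
  have hdecomp : r • u = α • p + β • J p := o.norm_sq_smul_eq_inner_smul_add_areaForm_smul p u
  have hαβ : α ^ 2 + β ^ 2 = r ^ 2 := by
    rw [o.inner_sq_add_areaForm_sq, hu]; ring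
  have hr : r ≠ 0 := by
    have hp : p ≠ 0 := by
      rintro rfl
      exact hxp (by simpa [u, sub_eq_zero] using hu)
    positivity
  have hα : α ≠ r := by
    rintro hα
    have hβ : β = 0 := pow_eq_zero_iff two_ne_zero |>.1 (by rw [hα] at hαβ; linarith)
    apply hxp
    rw [hα, hβ, zero_smul, add_zero] at hdecomp
    rw [← smul_right_injective V hr hdecomp, add_sub_cancel]
  refine ⟨β / (r - α), ?_⟩
  have hrα : r - α ≠ 0 := sub_ne_zero.2 hα.symm
  suffices h : (1 + (β / (r - α)) ^ 2)⁻¹ • (((β / (r - α)) ^ 2 - 1) • p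
      + (2 * (β / (r - α))) • J p) = u by
    rw [circleParam, h, add_sub_cancel]
  apply smul_right_injective V hr
  simp only [hdecomp]
  clear_value r α β
  have h1s : 1 + (β / (r - α)) ^ 2 = 2 * r / (r - α) := by
    field_simp
    linear_combination hαβ
  match_scalars <;> rw [h1s] <;> field_simp
  · linear_combination hαβ

lemma smul_map_circleParam {F : Type*} [NormedAddCommGroup F] [InnerProductSpace ℝ F]
    (h : V →ᵃ[ℝ] F) (c p : V) (s : ℝ) :
    (1 + s ^ 2) • h (o.circleParam c p s)
      = s ^ 2 • h (c + p) + s • (2 • h.linear (J p)) + (h c - h.linear p) := by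
  have hs : 1 + s ^ 2 ≠ 0 := by positivity
  rw [circleParam, h.decomp]
  simp only [Pi.add_apply, map_add, map_smul, smul_add, smul_smul]
  match_scalars <;> field_simp <;> ring

end Orientation

theorem norm_eq_one_on_sphere_of_one_le_of_three_eq_one
    {V F : Type*} [NormedAddCommGroup V] [InnerProductSpace ℝ V] [Fact (finrank ℝ V = 2)]
    [NormedAddCommGroup F] [InnerProductSpace ℝ F] (h : V →ᵃ[ℝ] F) {c : V} {ρ : ℝ}
    (hle : ∀ x ∈ sphere c ρ, 1 ≤ ‖h x‖) {x₁ x₂ x₃ : V}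
    (hx₁ : x₁ ∈ sphere c ρ) (hx₂ : x₂ ∈ sphere c ρ) (hx₃ : x₃ ∈ sphere c ρ)
    (h₁₂ : x₁ ≠ x₂) (h₁₃ : x₁ ≠ x₃) (h₂₃ : x₂ ≠ x₃)
    (e₁ : ‖h x₁‖ = 1) (e₂ : ‖h x₂‖ = 1) (e₃ : ‖h x₃‖ = 1) :
    ∀ x ∈ sphere c ρ, ‖h x‖ = 1 := by
  let o : Orientation ℝ V (Fin 2) := (finBasisOfFinrankEq ℝ V Fact.out).orientation
  set p := x₃ - c
  have hpole : c + p = x₃ := add_sub_cancel c x₃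
  obtain rfl : ρ = ‖p‖ := (mem_sphere_iff_norm.1 hx₃).symm
  obtain ⟨P, hdeg, hP⟩ := exists_natDegree_le_three_eval_eq_norm_sq_sub (hpole ▸ e₃)
    (2 • h.linear (o.rightAngleRotation p)) (h c - h.linear p)
  have hPγ : ∀ s, P.eval s = (1 + s ^ 2) ^ 2 * (‖h (o.circleParam c p s)‖ ^ 2 - 1) := by
    intro s
    rw [hP, ← o.smul_map_circleParam, norm_smul, Real.norm_of_nonneg (by positivity)]
    ring
  have hP_nonneg : ∀ s, 0 ≤ P.eval s := fun s => by
    rw [hPγ]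
    exact mul_nonneg (by positivity)
      (sub_nonneg.2 (one_le_pow₀ (hle _ (o.circleParam_mem_sphere c p s))))
  have hroot : ∀ {y}, y ∈ sphere c ‖p‖ → y ≠ x₃ → ∃ s, o.circleParam c p s = y ∧
      (P.IsRoot s ↔ ‖h y‖ = 1) := by
    intro y hy hyp
    obtain ⟨s, rfl⟩ := o.exists_circleParam_eq hy (hpole ▸ hyp)
    refine ⟨s, rfl, ?_⟩
    rw [IsRoot, hPγ, mul_eq_zero, sub_eq_zero,
      pow_eq_one_iff_of_nonneg (norm_nonneg _) two_ne_zero]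
    simp [ne_of_gt (by positivity : (0 : ℝ) < (1 + s ^ 2) ^ 2)]
  obtain ⟨s₁, rfl, hs₁⟩ := hroot hx₁ h₁₃
  obtain ⟨s₂, rfl, hs₂⟩ := hroot hx₂ h₂₃
  have hP0 : P = 0 := by
    refine eq_zero_of_forall_eval_nonneg_of_natDegree_lt hP_nonneg (s := {s₁, s₂}) ?_ ?_
    · simpa using ⟨hs₁.2 e₁, hs₂.2 e₂⟩
    · rw [Finset.card_pair (fun hs => h₁₂ (congrArg _ hs))]
      omega
  intro x hx
  rcases eq_or_ne x x₃ with rfl | hx₃'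
  · exact e₃
  · obtain ⟨s, rfl, hs⟩ := hroot hx hx₃'
    exact hs.1 (by simp [hP0])

/-- If `C` is a circle in `ℝ²` and `E` an ellipse (the image of the unit circle under an
invertible affine map) contained in the closed disc bounded by `C`, and `C ∩ E` contains
three distinct points, then `E = C`. -/
theorem ellipse_eq_circle_of_three_points
    (c : EuclideanSpace ℝ (Fin 2)) (ρ : ℝ) (hρ : 0 < ρ)
    (f : EuclideanSpace ℝ (Fin 2) →ᵃ[ℝ] EuclideanSpace ℝ (Fin 2))
    (hf : Function.Bijective f)
    (E : Set (EuclideanSpace ℝ (Fin 2))) (hE : E = f '' Metric.sphere 0 1)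
    (hEC : E ⊆ Metric.closedBall c ρ)
    (M N O : EuclideanSpace ℝ (Fin 2)) (hMN : M ≠ N) (hNO : N ≠ O) (hMO : M ≠ O)
    (hM : M ∈ Metric.sphere c ρ ∩ E) (hN : N ∈ Metric.sphere c ρ ∩ E)
    (hO : O ∈ Metric.sphere c ρ ∩ E) :
    E = Metric.sphere c ρ := by
  let g := AffineEquiv.ofBijective hf
  let H := g.toContinuousAffineEquiv.toHomeomorph
  have hH : ⇑H = f := rfl
  have hmemE : ∀ x, x ∈ E ↔ ‖g.symm x‖ = 1 := fun x => by
    rw [hE, ← hH, H.image_eq_preimage_symm, Set.mem_preimage, mem_sphere_zero_iff_norm]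
    rfl
  have hconv : f '' closedBall 0 1 = convexHull ℝ E := by
    rw [hE, ← f.image_convexHull, convexHull_sphere_eq_closedBall 0 zero_le_one]
  have hdisc : f '' closedBall 0 1 ⊆ closedBall c ρ :=
    hconv ▸ convexHull_min hEC (convex_closedBall c ρ)
  have hball : f '' ball 0 1 ⊆ ball c ρ := by
    rw [← interior_closedBall 0 one_ne_zero, ← interior_closedBall c hρ.ne', ← hH,
      H.image_interior]
    exact interior_mono hdisc
  have hout : ∀ x ∈ sphere c ρ, 1 ≤ ‖g.symm x‖ := fun x hx => by
    by_contra! hlt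
    have := hball ⟨g.symm x, mem_ball_zero_iff.2 hlt, g.apply_symm_apply x⟩
    exact (mem_ball.1 this).ne (mem_sphere.1 hx)
  have hsphere : sphere c ρ ⊆ E := fun x hx => (hmemE x).2 <|
    norm_eq_one_on_sphere_of_one_le_of_three_eq_one g.symm.toAffineMap hout hM.1 hN.1 hO.1
      hMN hMO hNO ((hmemE M).1 hM.2) ((hmemE N).1 hN.2) ((hmemE O).1 hO.2) x hx
  have hdisc_eq : f '' closedBall 0 1 = closedBall c ρ := by
    refine hdisc.antisymm ?_
    rw [hconv, ← convexHull_sphere_eq_closedBall c hρ.le]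
    exact convexHull_mono hsphere
  rw [hE, ← frontier_closedBall (0 : EuclideanSpace ℝ (Fin 2)) one_ne_zero, ← hH,
    H.image_frontier, hH, hdisc_eq, frontier_closedBall c hρ.ne']
end

section
/- Let S be the unit sphere in ℝ³ and E an ellipsoid contained in the closed unit ball. Then the intersection S ∩ E is either empty, a single point, exactly two points, a circle, or the whole sphere S. -/
/-!
Let `g = f⁻¹`, so that `E = {x | ‖g x‖ = 1}`. Since `E` lies in the unit ball, so does the solid
ellipsoid `{x | ‖g x‖ ≤ 1}`: a ray leaving it through the unit sphere `S` would cross `E` outside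
the ball. Hence `‖g ·‖ ≥ 1` on `S`, and `S ∩ E` is the set where this minimum is attained. At a
minimiser `z` the Lagrange condition reads `L† (g z) = μ • z`, with `L` the linear part of `g`;
expanding `‖g x‖²` around `z` on `S` shows that the minimisers are exactly the points of `S` in
the affine subspace `z + ker (L† L - μ)`. A sphere in `ℝ³` meets an affine subspace through one of
its points in that point, two points, a circle, or the whole sphere.
-/

open Metric Filter Set Module
open scoped RealInnerProductSpace

section Ellipsoid
variable {V W : Type*} [NormedAddCommGroup V] [InnerProductSpace ℝ V]
  [NormedAddCommGroup W] [InnerProductSpace ℝ W]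

theorem AffineMap.preimage_ball_subset_ball {g : V →ᵃ[ℝ] W} (hg : Function.Injective g.linear)
    (hE : g ⁻¹' sphere 0 1 ⊆ closedBall 0 1) : g ⁻¹' ball 0 1 ⊆ ball 0 1 := by
  intro x hx
  rw [mem_preimage, mem_ball_zero_iff] at hx
  rw [mem_ball_zero_iff]
  rcases eq_or_ne x 0 with rfl | hx0
  · simp
  set a := g.linear x
  have ha : 0 < ‖a‖ := norm_pos_iff.2 ((map_ne_zero_iff _ hg).2 hx0)
  have hray : ∀ t : ℝ, g (t • x) = t • a + g 0 := fun t => by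
    rw [g.decomp]
    simp [a]
  have hcont : Continuous fun t : ℝ => ‖g (t • x)‖ := by
    simp only [hray]
    fun_prop
  have htop : Tendsto (fun t : ℝ => ‖g (t • x)‖) atTop atTop := by
    refine tendsto_atTop_mono (fun t => ?_)
      (tendsto_atTop_add_const_right _ (-‖g 0‖) (tendsto_id.atTop_mul_const ha))
    have := norm_sub_norm_le (t • a) (-g 0)
    rw [sub_neg_eq_add, norm_neg, norm_smul, Real.norm_eq_abs] at this
    rw [hray, id_eq]
    nlinarith [le_abs_self t]
  obtain ⟨t, ht1, ht⟩ : ∃ t ∈ Ici (1 : ℝ), ‖g (t • x)‖ = 1 :=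
    intermediate_value_Ici hcont.continuousOn htop (by rw [mem_Ici, one_smul]; exact hx.le)
  have ht1' : 1 < t := lt_of_le_of_ne ht1 (by rintro rfl; rw [one_smul] at ht; linarith)
  have := hE (show t • x ∈ g ⁻¹' sphere 0 1 by simpa using ht)
  rw [mem_closedBall_zero_iff, norm_smul, Real.norm_of_nonneg (by linarith)] at this
  nlinarith [norm_nonneg x]

theorem inner_sub_eq_half_norm_sq_of_norm_eq {x z : V} (h : ‖x‖ = ‖z‖) :
    ⟪x, x - z⟫ = ‖x - z‖ ^ 2 / 2 := by
  rw [norm_sub_sq_real, inner_sub_right, real_inner_self_eq_norm_sq, h]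
  ring

theorem AffineMap.norm_sq_apply_eq_of_adjoint_apply_eq_smul [FiniteDimensional ℝ V]
    [FiniteDimensional ℝ W] {g : V →ᵃ[ℝ] W} {z x : V} {μ : ℝ}
    (hμ : LinearMap.adjoint g.linear (g z) = μ • z) (hx : ‖x‖ = ‖z‖) :
    ‖g x‖ ^ 2 = ‖g z‖ ^ 2 + (‖g.linear (x - z)‖ ^ 2 - μ * ‖x - z‖ ^ 2) := by
  have hgx : g x = g z + g.linear (x - z) := by
    rw [show g.linear (x - z) = g x - g z from g.linearMap_vsub x z, add_sub_cancel]
  have hz : ⟪z, x - z⟫ = -(‖x - z‖ ^ 2 / 2) := by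
    have h := inner_sub_left (𝕜 := ℝ) x z (x - z)
    rw [real_inner_self_eq_norm_sq, inner_sub_eq_half_norm_sq_of_norm_eq hx] at h
    linarith
  rw [hgx, norm_add_sq_real, ← LinearMap.adjoint_inner_left, hμ, real_inner_smul_left, hz]
  ring

variable [FiniteDimensional ℝ V] [FiniteDimensional ℝ W]

theorem AffineMap.exists_adjoint_apply_eq_smul_of_isMinOn {g : V →ᵃ[ℝ] W} {z : V} (hz : z ≠ 0)
    (hmin : IsMinOn (‖g ·‖) (sphere 0 ‖z‖) z) :
    ∃ μ : ℝ, LinearMap.adjoint g.linear (g z) = μ • z := by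
  have hextr : IsLocalExtrOn (‖g ·‖ ^ 2) {x | ‖x‖ ^ 2 = ‖z‖ ^ 2} z := by
    refine Or.inl (IsMinOn.localize fun x hx => ?_)
    exact pow_le_pow_left₀ (norm_nonneg _) (hmin (by simpa using hx)) 2
  set L := LinearMap.toContinuousLinearMap g.linear
  have hg : HasStrictFDerivAt g L z := by
    rw [g.decomp]
    exact L.hasStrictFDerivAt.add_const (g 0)
  obtain ⟨a, b, hab, h⟩ := hextr.exists_multipliers_of_hasStrictFDerivAt_1d
    (hasStrictFDerivAt_norm_sq z) ((hasStrictFDerivAt_norm_sq (g z)).comp z hg)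
  have key : ∀ w, a * ⟪z, w⟫ + b * ⟪LinearMap.adjoint g.linear (g z), w⟫ = 0 := fun w => by
    have := congrArg (· w) h
    simp only [ContinuousLinearMap.smul_comp, add_apply,
      smul_apply, coe_innerSL_apply, nsmul_eq_mul, Nat.cast_ofNat, smul_eq_mul,
      ContinuousLinearMap.comp_apply, LinearMap.coe_toContinuousLinearMap',
      zero_apply, L] at this
    rw [LinearMap.adjoint_inner_left]
    linarith
  have hb : b ≠ 0 := by
    rintro rfl
    have := key z
    simp_all
  refine ⟨-a / b, ext_inner_right ℝ fun w => ?_⟩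
  rw [real_inner_smul_left]
  field_simp
  linarith [key w]

theorem AffineMap.norm_apply_eq_iff_sub_mem_eigenspace {g : V →ᵃ[ℝ] W} {z : V} (hz : z ≠ 0)
    (hmin : IsMinOn (‖g ·‖) (sphere 0 ‖z‖) z) {μ : ℝ}
    (hμ : LinearMap.adjoint g.linear (g z) = μ • z) {x : V} (hx : ‖x‖ = ‖z‖) :
    ‖g x‖ = ‖g z‖ ↔ x - z ∈ End.eigenspace (LinearMap.adjoint g.linear ∘ₗ g.linear) μ := by
  have hquad := g.norm_sq_apply_eq_of_adjoint_apply_eq_smul hμ hx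
  rw [End.mem_eigenspace_iff, LinearMap.comp_apply]
  constructor
  · -- `x` is a minimiser too; its own multiplier `μ'` must equal `μ` unless `x = z`.
    intro hxz
    have hx0 : x ≠ 0 := by rintro rfl; exact hz (norm_eq_zero.1 (by simpa using hx.symm))
    obtain ⟨μ', hμ'⟩ := g.exists_adjoint_apply_eq_smul_of_isMinOn hx0 (by
      rw [hx]; exact fun y hy => (hxz.trans_le (hmin hy) : ‖g x‖ ≤ ‖g y‖))
    have hM : LinearMap.adjoint g.linear (g.linear (x - z)) = μ • (x - z) + (μ' - μ) • x := by
      rw [show g.linear (x - z) = g x - g z from g.linearMap_vsub x z, map_sub, hμ, hμ']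
      module
    have hnorm : ‖g.linear (x - z)‖ ^ 2 = μ * ‖x - z‖ ^ 2 := by
      rw [hxz] at hquad
      linarith
    have : (μ' - μ) * (‖x - z‖ ^ 2 / 2) = 0 := by
      have := congrArg (⟪·, x - z⟫) hM
      simp only [LinearMap.adjoint_inner_left, inner_add_left, real_inner_smul_left,
        real_inner_self_eq_norm_sq, inner_sub_eq_half_norm_sq_of_norm_eq hx] at this
      linarith
    rcases mul_eq_zero.1 this with h | h
    · simpa [sub_eq_zero.1 h] using hM
    · simp_all [sub_eq_zero]
  · intro hM
    have : ‖g.linear (x - z)‖ ^ 2 = μ * ‖x - z‖ ^ 2 := by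
      rw [← real_inner_self_eq_norm_sq, ← LinearMap.adjoint_inner_left, hM,
        real_inner_smul_left, real_inner_self_eq_norm_sq]
    rw [this, sub_self, add_zero] at hquad
    exact (sq_eq_sq₀ (norm_nonneg _) (norm_nonneg _)).1 hquad

theorem AffineMap.exists_sphere_inter_preimage_sphere_eq_inter_affineSubspace
    {g : V →ᵃ[ℝ] W} (hg : Function.Injective g.linear) (hE : g ⁻¹' sphere 0 1 ⊆ closedBall 0 1)
    {z : V} (hz : z ∈ sphere 0 1 ∩ g ⁻¹' sphere 0 1) :
    ∃ P : AffineSubspace ℝ V, z ∈ P ∧ sphere 0 1 ∩ g ⁻¹' sphere 0 1 = sphere 0 1 ∩ P := by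
  obtain ⟨hzS, hzE⟩ := hz
  rw [mem_sphere_zero_iff_norm] at hzS
  rw [mem_preimage, mem_sphere_zero_iff_norm] at hzE
  have hmin : IsMinOn (‖g ·‖) (sphere 0 ‖z‖) z := fun x hx => by
    rw [hzS, mem_sphere_zero_iff_norm] at hx
    show ‖g z‖ ≤ ‖g x‖
    by_contra! hlt
    have := g.preimage_ball_subset_ball hg hE (by rwa [mem_preimage, mem_ball_zero_iff, ← hzE])
    rw [mem_ball_zero_iff] at this
    linarith
  have hz0 : z ≠ 0 := by rintro rfl; simp at hzS
  obtain ⟨μ, hμ⟩ := g.exists_adjoint_apply_eq_smul_of_isMinOn hz0 hmin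
  refine ⟨.mk' z (End.eigenspace (LinearMap.adjoint g.linear ∘ₗ g.linear) μ),
    AffineSubspace.self_mem_mk' _ _, Set.ext fun x => and_congr_right fun hx => ?_⟩
  rw [mem_sphere_zero_iff_norm] at hx
  rw [mem_preimage, mem_sphere_zero_iff_norm, SetLike.mem_coe, AffineSubspace.mem_mk',
    vsub_eq_sub, ← g.norm_apply_eq_iff_sub_mem_eigenspace hz0 hmin hμ (hx.trans hzS.symm), hzE]

end Ellipsoid

section SphereInterAffineSubspace
variable {V : Type*} [NormedAddCommGroup V] [InnerProductSpace ℝ V] [FiniteDimensional ℝ V]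

theorem sphere_inter_eq_pair_of_finrank_direction_le_one {P : AffineSubspace ℝ V} {o z : V}
    {R : ℝ} (hz : z ∈ sphere o R) (hzP : z ∈ P) (hP : finrank ℝ P.direction ≤ 1) :
    ∃ z', sphere o R ∩ P = {z, z'} := by
  obtain ⟨v, hv⟩ := ((Submodule.finrank_le_one_iff_isPrincipal _).1 hP).principal
  have hPv : P = AffineSubspace.mk' z (ℝ ∙ v) := by rw [← hv, AffineSubspace.mk'_eq hzP]
  let s : EuclideanGeometry.Sphere V := ⟨o, R⟩
  have hzs : z ∈ s := hz
  refine ⟨s.secondInter z v, Set.ext fun x => ⟨fun ⟨hxs, hxP⟩ => ?_, fun hx => ?_⟩⟩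
  · rw [hPv] at hxP
    exact (EuclideanGeometry.Sphere.eq_or_eq_secondInter_of_mem_mk'_span_singleton_iff_mem
      hzs hxP).2 hxs
  · have hxP : x ∈ P := by
      rw [hPv]
      rcases hx with rfl | rfl
      · exact AffineSubspace.self_mem_mk' _ _
      · exact AffineSubspace.vadd_mem_mk' _
          (Submodule.smul_mem _ _ (Submodule.mem_span_singleton_self v))
    rw [hPv] at hxP
    exact ⟨(EuclideanGeometry.Sphere.eq_or_eq_secondInter_of_mem_mk'_span_singleton_iff_mem
      hzs hxP).1 hx, hPv ▸ hxP⟩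

theorem exists_sphere_inter_eq_inter_sphere {P : AffineSubspace ℝ V} {o z : V} {R : ℝ}
    (hz : z ∈ sphere o R) (hzP : z ∈ P) :
    ∃ c r, sphere o R ∩ P = (P : Set V) ∩ sphere c r := by
  have : Nonempty P := ⟨⟨z, hzP⟩⟩
  set c : V := (EuclideanGeometry.orthogonalProjection P o : V)
  have hpyth : ∀ x ∈ P, dist x o ^ 2 = dist x c ^ 2 + dist o c ^ 2 := fun x hx => by
    simpa only [sq] using
      EuclideanGeometry.dist_sq_eq_dist_orthogonalProjection_sq_add_dist_orthogonalProjection_sq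
        o hx
  refine ⟨c, dist z c, Set.ext fun x => ?_⟩
  rw [inter_comm, mem_inter_iff, mem_inter_iff, mem_sphere, mem_sphere]
  refine and_congr_right fun hx => ?_
  rw [mem_sphere] at hz
  rw [← sq_eq_sq₀ dist_nonneg (hz ▸ dist_nonneg), ← sq_eq_sq₀ dist_nonneg dist_nonneg,
    hpyth x hx, ← hz, hpyth z hzP, add_left_inj]

theorem sphere_inter_affineSubspace_cases (hV : finrank ℝ V = 3) {P : AffineSubspace ℝ V}
    {o z : V} {R : ℝ} (hz : z ∈ sphere o R) (hzP : z ∈ P) :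
    (∃ p, sphere o R ∩ P = {p}) ∨
    (∃ p q, p ≠ q ∧ sphere o R ∩ P = {p, q}) ∨
    (∃ (c : V) (r : ℝ) (Q : AffineSubspace ℝ V),
        0 < r ∧ finrank ℝ Q.direction = 2 ∧ sphere o R ∩ P = (Q : Set V) ∩ sphere c r) ∨
    sphere o R ∩ P = sphere o R := by
  have hdim : finrank ℝ P.direction ≤ 3 := hV ▸ Submodule.finrank_le _
  obtain hP | hP | hP : finrank ℝ P.direction ≤ 1 ∨ finrank ℝ P.direction = 2 ∨
      finrank ℝ P.direction = 3 := by omega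
  · obtain ⟨z', hz'⟩ := sphere_inter_eq_pair_of_finrank_direction_le_one hz hzP hP
    rcases eq_or_ne z z' with rfl | hzz'
    · exact Or.inl ⟨z, by rw [hz', pair_eq_singleton]⟩
    · exact Or.inr (Or.inl ⟨z, z', hzz', hz'⟩)
  · obtain ⟨c, r, hcr⟩ := exists_sphere_inter_eq_inter_sphere hz hzP
    have hzc : dist z c = r := by
      have : z ∈ sphere o R ∩ P := ⟨hz, hzP⟩
      rw [hcr] at this
      exact this.2
    rcases (hzc ▸ dist_nonneg : 0 ≤ r).eq_or_lt with rfl | hr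
    · refine Or.inl ⟨z, ?_⟩
      rw [hcr, sphere_zero, ← dist_eq_zero.1 hzc, inter_singleton_of_mem hzP]
    · exact Or.inr (Or.inr (Or.inl ⟨c, r, P, hr, hP, hcr⟩))
  · have hPtop : P = ⊤ := by
      rw [← AffineSubspace.direction_eq_top_iff_of_nonempty ⟨z, hzP⟩]
      exact Submodule.eq_top_of_finrank_eq (hP.trans hV.symm)
    exact Or.inr (Or.inr (Or.inr (by rw [hPtop, AffineSubspace.top_coe, inter_univ])))

end SphereInterAffineSubspace

/-- The intersection of the unit sphere `S` of `ℝ³` with an ellipsoid `E` (image of `S`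
under an invertible affine map) contained in the closed unit ball is either empty, a
single point, exactly two points, a circle, or the whole sphere `S`. -/
theorem sphere_inter_ellipsoid_classification
    (f : EuclideanSpace ℝ (Fin 3) →ᵃ[ℝ] EuclideanSpace ℝ (Fin 3))
    (hf : Function.Bijective f)
    (E : Set (EuclideanSpace ℝ (Fin 3))) (hE : E = f '' Metric.sphere 0 1)
    (hEball : E ⊆ Metric.closedBall 0 1) :
    (Metric.sphere (0 : EuclideanSpace ℝ (Fin 3)) 1 ∩ E = ∅) ∨
    (∃ p, Metric.sphere (0 : EuclideanSpace ℝ (Fin 3)) 1 ∩ E = {p}) ∨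
    (∃ p q, p ≠ q ∧ Metric.sphere (0 : EuclideanSpace ℝ (Fin 3)) 1 ∩ E = {p, q}) ∨
    (∃ (c : EuclideanSpace ℝ (Fin 3)) (r : ℝ) (P : AffineSubspace ℝ (EuclideanSpace ℝ (Fin 3))),
        0 < r ∧ Module.finrank ℝ P.direction = 2 ∧
        Metric.sphere (0 : EuclideanSpace ℝ (Fin 3)) 1 ∩ E =
          (P : Set (EuclideanSpace ℝ (Fin 3))) ∩ Metric.sphere c r) ∨
    (Metric.sphere (0 : EuclideanSpace ℝ (Fin 3)) 1 ∩ E =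
        Metric.sphere (0 : EuclideanSpace ℝ (Fin 3)) 1) := by
  set g := (AffineEquiv.ofBijective hf).symm.toAffineMap
  have hEg : E = g ⁻¹' sphere 0 1 := by
    rw [hE, AffineEquiv.coe_toAffineMap, ← AffineEquiv.image_symm]
    rfl
  have hg : Function.Injective g.linear := (AffineEquiv.ofBijective hf).symm.linear.injective
  rcases (sphere 0 1 ∩ E).eq_empty_or_nonempty with hempty | ⟨z, hz⟩
  · exact Or.inl hempty
  rw [hEg] at hz hEball ⊢
  obtain ⟨P, hzP, hSP⟩ := g.exists_sphere_inter_preimage_sphere_eq_inter_affineSubspace hg hEball hz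
  rw [hSP]
  exact Or.inr (sphere_inter_affineSubspace_cases finrank_euclideanSpace_fin hz.1 hzP)
end

section
/- Suppose an ellipsoid E with semi-axes a, a, c (rotationally symmetric about the z-axis, with 0 < c < a² < 1), translated by t₃ = √((1−a²)(a²−c²))/a along the z-axis, touches the unit sphere in a circle of positive radius. Then the parameters (λ₁,λ₂,λ₃) = (±a,±a,±c) with translation (0,0,t₃) violate the complete-positivity condition t₃² ≤ (c ± 1)² − 4a²; specifically (c ± 1)² − 4a² − t₃² = (c² ± 2ca² − 3a⁴)/a² ≤ 0 for c < a², with equality only in degenerate cases. -/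
/-! With `t₃² = (1 - a²)(a² - c²)/a²` and `s = ±1`, clearing the denominator turns
`(c + s)² - 4a² - t₃²` into `(c² + 2sca² - 3a⁴)/a²`, and the numerator is nonpositive because
`c² ≤ a⁴` and `|2sca²| ≤ 2a⁴` whenever `|c| ≤ a²`. -/

namespace FujiwaraAlgoet

variable {a c s : ℝ}

theorem margin_eq (hs : s ^ 2 = 1) (ha : a ≠ 0) :
    (c + s) ^ 2 - 4 * a ^ 2 - (1 - a ^ 2) * (a ^ 2 - c ^ 2) / a ^ 2 =
      (c ^ 2 + 2 * s * c * a ^ 2 - 3 * a ^ 4) / a ^ 2 := by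
  field_simp
  linear_combination (a ^ 2) * hs

theorem numerator_nonpos (hs : s ^ 2 = 1) (hca : |c| ≤ a ^ 2) :
    c ^ 2 + 2 * s * c * a ^ 2 - 3 * a ^ 4 ≤ 0 := by
  have hs1 : |s| = 1 := (pow_eq_one_iff_of_nonneg (abs_nonneg s) two_ne_zero).mp (by rwa [sq_abs])
  have hsc : s * c ≤ a ^ 2 := (le_abs_self _).trans (by rwa [abs_mul, hs1, one_mul])
  have hc2 : c ^ 2 ≤ (a ^ 2) ^ 2 := sq_le_sq.mpr (by rwa [abs_sq])
  nlinarith [sq_nonneg a]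

theorem margin_eq_and_nonpos (hs : s ^ 2 = 1) (ha : a ≠ 0) (hca : |c| ≤ a ^ 2) :
    (c + s) ^ 2 - 4 * a ^ 2 - (1 - a ^ 2) * (a ^ 2 - c ^ 2) / a ^ 2 =
        (c ^ 2 + 2 * s * c * a ^ 2 - 3 * a ^ 4) / a ^ 2 ∧
      (c + s) ^ 2 - 4 * a ^ 2 - (1 - a ^ 2) * (a ^ 2 - c ^ 2) / a ^ 2 ≤ 0 := by
  rw [margin_eq hs ha]
  exact ⟨rfl, div_nonpos_of_nonpos_of_nonneg (numerator_nonpos hs hca) (sq_nonneg a)⟩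

end FujiwaraAlgoet

/-- A rotationally symmetric ellipsoid with semi-axes `a, a, c` (`0 < c < a² < 1`),
displaced by `t₃ = √((1-a²)(a²-c²))/a` along its symmetry axis so as to touch the unit
sphere in a circle of positive radius, violates the complete-positivity condition
`t₃² ≤ (c ± 1)² - 4a²`: indeed `(c ± 1)² - 4a² - t₃² = (c² ± 2ca² - 3a⁴)/a² ≤ 0`. -/
theorem no_circle_pure_output_core (a c : ℝ)
    (hc : 0 < c) (hca : c < a ^ 2) (ha : a ^ 2 < 1)
    (t₃ : ℝ) (ht : t₃ = Real.sqrt ((1 - a ^ 2) * (a ^ 2 - c ^ 2)) / a) :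
    ((c + 1) ^ 2 - 4 * a ^ 2 - t₃ ^ 2 = (c ^ 2 + 2 * c * a ^ 2 - 3 * a ^ 4) / a ^ 2 ∧
      (c + 1) ^ 2 - 4 * a ^ 2 - t₃ ^ 2 ≤ 0) ∧
    ((c - 1) ^ 2 - 4 * a ^ 2 - t₃ ^ 2 = (c ^ 2 - 2 * c * a ^ 2 - 3 * a ^ 4) / a ^ 2 ∧
      (c - 1) ^ 2 - 4 * a ^ 2 - t₃ ^ 2 ≤ 0) := by
  have ha0 : a ≠ 0 := by rintro rfl; simp at hca; linarith
  have hca' : |c| ≤ a ^ 2 := (abs_of_pos hc).trans_le hca.le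
  have hc2 : c ^ 2 < a ^ 2 := by nlinarith
  have ht2 : t₃ ^ 2 = (1 - a ^ 2) * (a ^ 2 - c ^ 2) / a ^ 2 := by
    rw [ht, div_pow, Real.sq_sqrt (mul_nonneg (by linarith) (by linarith))]
  rw [ht2]
  constructor
  · simpa using FujiwaraAlgoet.margin_eq_and_nonpos (one_pow 2) ha0 hca'
  · simpa [sub_eq_add_neg] using
      FujiwaraAlgoet.margin_eq_and_nonpos (s := -1) (by norm_num) ha0 hca'
end
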